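/- arXiv:1911.06176 — 3 statements merged into one kernel-verified Lean document; each statement's English description precedes it below -/
import Mathlib

section
/- Let L₁,…,L_K be closed subspaces of a real Hilbert space H such that L₁^⊥ + ⋯ + L_K^⊥ ≠ H. Then ρ(D_L) := inf_{‖x‖=1} sup{ |⟨x,g⟩| : g a unit vector in some Lⱼ^⊥ } = 0. -/
/-!
If `ρ > 0`, every unit vector `u` has a projection of norm at least `ρ / 2` onto some `Lⱼᗮ`,
because `|⟪u, g⟫| ≤ ‖P_{Lⱼᗮ} u‖` for unit vectors `g ∈ Lⱼᗮ`. By Pythagoras, subtracting this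
projection shrinks the norm by the factor `√(1 - ρ² / 4) < 1`, while the projection itself is
no longer than the vector. Iterating, as in the second half of the proof of the open mapping
theorem, writes every vector as a convergent series whose terms, grouped by `j`, lie in the
closed subspaces `Lⱼᗮ`; so `L₁ᗮ + ⋯ + L_Kᗮ = H`.
-/

open Filter Topology Finset

theorem AddMonoidHom.surjective_of_approx_preimage_norm_le {E F : Type*} [NormedAddCommGroup E]
    [CompleteSpace E] [NormedAddCommGroup F] (f : E →+ F) (hf : Continuous f) {C q : ℝ}
    (hq : q < 1) (h : ∀ y, ∃ x, ‖y - f x‖ ≤ q * ‖y‖ ∧ ‖x‖ ≤ C * ‖y‖) :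
    Function.Surjective f := by
  choose g hg using h
  intro y
  set q₀ := max q 0
  have hq₀ : q₀ < 1 := max_lt hq one_pos
  let residual : ℕ → F := fun n => (fun z => z - f (g z))^[n] y
  have residual_succ : ∀ n, residual (n + 1) = residual n - f (g (residual n)) := fun n =>
    Function.iterate_succ_apply' _ n y
  have norm_residual_le : ∀ n, ‖residual n‖ ≤ q₀ ^ n * ‖y‖ := by
    intro n
    induction n with
    | zero => simp [residual]
    | succ n ih =>
      calc ‖residual (n + 1)‖ ≤ q * ‖residual n‖ := residual_succ n ▸ (hg _).1
        _ ≤ q₀ * (q₀ ^ n * ‖y‖) :=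
          mul_le_mul (le_max_left _ _) ih (norm_nonneg _) (le_max_right _ _)
        _ = q₀ ^ (n + 1) * ‖y‖ := by ring
  let u : ℕ → E := fun n => g (residual n)
  have norm_u_le : ∀ n, ‖u n‖ ≤ max C 0 * ‖y‖ * q₀ ^ n := fun n =>
    calc ‖u n‖ ≤ C * ‖residual n‖ := (hg _).2
      _ ≤ max C 0 * (q₀ ^ n * ‖y‖) :=
        mul_le_mul (le_max_left _ _) (norm_residual_le n) (norm_nonneg _) (le_max_right _ _)
      _ = max C 0 * ‖y‖ * q₀ ^ n := by ring
  have u_summable : Summable u :=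
    .of_norm_bounded ((summable_geometric_of_lt_one (le_max_right _ _) hq₀).mul_left _) norm_u_le
  have map_partial_sum : ∀ n, f (∑ k ∈ Finset.range n, u k) = y - residual n := by
    intro n
    induction n with
    | zero => simp [residual]
    | succ n ih => rw [sum_range_succ, map_add, ih, residual_succ]; abel
  have residual_tendsto : Tendsto residual atTop (𝓝 0) := squeeze_zero_norm norm_residual_le <| by
    simpa using (tendsto_pow_atTop_nhds_zero_of_lt_one (le_max_right _ _) hq₀).mul_const ‖y‖
  refine ⟨∑' n, u n,
    tendsto_nhds_unique ((hf.tendsto _).comp u_summable.hasSum.tendsto_sum_nat) ?_⟩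
  simpa [Function.comp_def, map_partial_sum] using tendsto_const_nhds.sub residual_tendsto

section Projection

variable {𝕜 H : Type*} [RCLike 𝕜] [NormedAddCommGroup H] [InnerProductSpace 𝕜 H]

theorem Submodule.norm_inner_le_norm_starProjection (U : Submodule 𝕜 H)
    [U.HasOrthogonalProjection] {g : H} (hg : g ∈ U) (x : H) :
    ‖(inner 𝕜 x g : 𝕜)‖ ≤ ‖U.starProjection x‖ * ‖g‖ :=
  calc ‖(inner 𝕜 x g : 𝕜)‖ = ‖(inner 𝕜 (U.starProjection x) g : 𝕜)‖ := by
        rw [U.inner_starProjection_left_eq_right, U.starProjection_eq_self_iff.2 hg]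
    _ ≤ ‖U.starProjection x‖ * ‖g‖ := norm_inner_le_norm _ _

theorem Submodule.norm_sub_starProjection_le (U : Submodule 𝕜 H) [U.HasOrthogonalProjection]
    {c : ℝ} (hc : 0 ≤ c) {y : H} (hy : c * ‖y‖ ≤ ‖U.starProjection y‖) :
    ‖y - U.starProjection y‖ ≤ √(1 - c ^ 2) * ‖y‖ := by
  have pythagoras := U.norm_sq_eq_add_norm_sq_starProjection y
  rw [U.starProjection_orthogonal_val] at pythagoras
  have : (c * ‖y‖) ^ 2 ≤ ‖U.starProjection y‖ ^ 2 := by gcongr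
  calc ‖y - U.starProjection y‖ = √(‖y - U.starProjection y‖ ^ 2) :=
        (Real.sqrt_sq (norm_nonneg _)).symm
    _ ≤ √((1 - c ^ 2) * ‖y‖ ^ 2) := Real.sqrt_le_sqrt (by nlinarith)
    _ = √(1 - c ^ 2) * ‖y‖ := by
      rw [Real.sqrt_mul' _ (sq_nonneg _), Real.sqrt_sq (norm_nonneg _)]

theorem exists_sum_eq_of_le_norm_starProjection {ι : Type*} [Fintype ι]
    (U : ι → Submodule 𝕜 H) [∀ i, CompleteSpace (U i)] {c : ℝ} (hc : 0 < c)
    (h : ∀ u : H, ‖u‖ = 1 → ∃ i, c ≤ ‖(U i).starProjection u‖) (y : H) :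
    ∃ f : ι → H, (∀ i, f i ∈ U i) ∧ y = ∑ i, f i := by
  classical
  let sum : (Π i, U i) →L[𝕜] H := ∑ i, (U i).subtypeL ∘L ContinuousLinearMap.proj i
  have approx : ∀ y, ∃ x, ‖y - sum x‖ ≤ √(1 - c ^ 2) * ‖y‖ ∧ ‖x‖ ≤ 1 * ‖y‖ := by
    intro y
    rcases eq_or_ne y 0 with rfl | hy
    · exact ⟨0, by simp⟩
    obtain ⟨i, hi⟩ := h _ (norm_smul_inv_norm (𝕜 := 𝕜) hy)
    rw [map_smul, norm_smul, norm_inv, RCLike.norm_ofReal, abs_norm,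
      le_inv_mul_iff₀ (norm_pos_iff.2 hy), mul_comm] at hi
    refine ⟨Pi.single i ((U i).orthogonalProjectionOnto y), ?_, ?_⟩
    · have : sum (Pi.single i ((U i).orthogonalProjectionOnto y)) = (U i).starProjection y := by
        simp only [sum, _root_.sum_apply, ContinuousLinearMap.comp_apply,
          ContinuousLinearMap.proj_apply, Submodule.subtypeL_apply]
        rw [Finset.sum_eq_single i (fun j _ hj => by simp [Pi.single_eq_of_ne hj]) (by simp)]
        simp
      exact this ▸ (U i).norm_sub_starProjection_le hc.le hi
    · rw [Pi.norm_single, one_mul]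
      exact (U i).norm_orthogonalProjectionOnto_apply_le y
  have hq : √(1 - c ^ 2) < 1 := by
    rw [Real.sqrt_lt' one_pos]
    nlinarith
  obtain ⟨x, rfl⟩ := AddMonoidHom.surjective_of_approx_preimage_norm_le
    (sum : (Π i, U i) →+ H) sum.continuous hq approx y
  exact ⟨fun i => x i, fun i => (x i).2, by simp [sum]⟩

end Projection

section SupAbsInner

variable {H : Type*} [NormedAddCommGroup H] [InnerProductSpace ℝ H]

noncomputable def supAbsInner (D : Set H) (x : H) : ℝ :=
  sSup {r : ℝ | ∃ g : H, ‖g‖ = 1 ∧ g ∈ D ∧ r = |(inner ℝ x g : ℝ)|}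

theorem supAbsInner_nonneg (D : Set H) (x : H) : 0 ≤ supAbsInner D x :=
  Real.sSup_nonneg <| by rintro _ ⟨g, -, -, rfl⟩; exact abs_nonneg _

theorem exists_lt_abs_inner_of_lt_supAbsInner {D : Set H} {x : H} {r : ℝ} (hr₀ : 0 ≤ r)
    (hr : r < supAbsInner D x) : ∃ g ∈ D, ‖g‖ = 1 ∧ r < |(inner ℝ x g : ℝ)| := by
  have hne : {r : ℝ | ∃ g : H, ‖g‖ = 1 ∧ g ∈ D ∧ r = |(inner ℝ x g : ℝ)|}.Nonempty := by
    by_contra hemp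
    rw [supAbsInner, Set.not_nonempty_iff_eq_empty.1 hemp, Real.sSup_empty] at hr
    exact hr.not_ge hr₀
  obtain ⟨_, ⟨g, hg, hgD, rfl⟩, hlt⟩ := exists_lt_of_lt_csSup hne hr
  exact ⟨g, hgD, hg, hlt⟩

end SupAbsInner

theorem rho_eq_zero_of_sum_of_orthocomplements_ne_top_general
    {H : Type*} [NormedAddCommGroup H] [InnerProductSpace ℝ H] [CompleteSpace H]
    {K : ℕ} (L : Fin K → Submodule ℝ H)
    (hsum : ∃ x : H, ¬ ∃ f : Fin K → H, (∀ j, f j ∈ (L j)ᗮ) ∧ x = ∑ j, f j) :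
    (⨅ x : {x : H // ‖x‖ = 1},
      sSup {r : ℝ | ∃ g : H, ‖g‖ = 1 ∧ (∃ j, g ∈ (L j)ᗮ) ∧
        r = |(inner ℝ (x : H) g : ℝ)|}) = 0 := by
  change ⨅ x : {x : H // ‖x‖ = 1}, supAbsInner {g | ∃ j, g ∈ (L j)ᗮ} x = 0
  set ρ := ⨅ x : {x : H // ‖x‖ = 1}, supAbsInner {g | ∃ j, g ∈ (L j)ᗮ} x
  by_contra hρ
  have hρ_pos : 0 < ρ := (Real.iInf_nonneg fun _ => supAbsInner_nonneg _ _).lt_of_ne' hρ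
  have hproj : ∀ u : H, ‖u‖ = 1 → ∃ j, ρ / 2 ≤ ‖(L j)ᗮ.starProjection u‖ := by
    intro u hu
    have hρu : ρ ≤ supAbsInner _ u :=
      ciInf_le ⟨0, Set.forall_mem_range.2 fun _ => supAbsInner_nonneg _ _⟩
        (⟨u, hu⟩ : {x : H // ‖x‖ = 1})
    obtain ⟨g, ⟨j, hgj⟩, hg, hlt⟩ := exists_lt_abs_inner_of_lt_supAbsInner
      (half_pos hρ_pos).le ((half_lt_self hρ_pos).trans_le hρu)
    refine ⟨j, hlt.le.trans ?_⟩
    simpa [hg] using (L j)ᗮ.norm_inner_le_norm_starProjection hgj u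
  obtain ⟨x, hx⟩ := hsum
  exact hx (exists_sum_eq_of_le_norm_starProjection (fun j => (L j)ᗮ) (half_pos hρ_pos) hproj x)

theorem rho_eq_zero_of_sum_of_orthocomplements_ne_top
    {H : Type*} [NormedAddCommGroup H] [InnerProductSpace ℝ H] [CompleteSpace H]
    {K : ℕ} (L : Fin K → Submodule ℝ H)
    (hclosed : ∀ k, IsClosed ((L k : Set H)))
    (hsum : ∃ x : H, ¬ ∃ f : Fin K → H, (∀ j, f j ∈ (L j)ᗮ) ∧ x = ∑ j, f j) :
    (⨅ x : {x : H // ‖x‖ = 1},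
      sSup {r : ℝ | ∃ g : H, ‖g‖ = 1 ∧ (∃ j, g ∈ (L j)ᗮ) ∧
        r = |(inner ℝ (x : H) g : ℝ)|}) = 0 :=
  rho_eq_zero_of_sum_of_orthocomplements_ne_top_general L hsum
end

section
/- Let L₁, L₂ be closed subspaces of a real Hilbert space H and T = P₂ ∘ P₁ the composition of the orthogonal projections. For every x₀ ∈ Y = L₁^⊥ + L₂^⊥ there is a constant C(x₀) (one may take C(x₀) = s(P₁ x₀), where s is the decomposition norm on Y) such that ‖Tⁿ x₀‖ ≤ C(x₀) / √(2n - 1) for all n ≥ 1. -/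
/-!
Let `B = P₁ P₂ P₁` and `u = P₁ x₀ ∈ L₁`, so that `Tⁿ x₀ = P₂ Bⁿ⁻¹ u`. The moments
`mⱼ = ⟪Bʲ u, u⟫` are the squared norms of the successive half-steps `u, P₂ u, P₁ P₂ u, …` of the
alternating projections, hence nonnegative and nonincreasing, and `‖Tⁿ x₀‖² = m_{2n-1}`.
For `w = ∑_{j<N} Bʲ u` the sum telescopes, `(1 - B) w = u - Bᴺ u`, so
`‖w - P₂ w‖² = ⟪(1 - B) w, w⟫ ≤ ⟪w, u⟫ = m₀ + ⋯ + m_{N-1} =: S`. If `u = z₁ + z₂` with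
`zⱼ ∈ Lⱼᗮ`, then `S = ⟪w - P₂ w, z₂⟫ ≤ √S ‖z₂‖`, whence `N m_{N-1} ≤ S ≤ ‖z₂‖²`; take `N = 2n`.
-/

/-- The decomposition norm `s(y) = inf { ‖y₁‖ + ‖y₂‖ : y = y₁ + y₂, yⱼ ∈ Lⱼ^⊥ }`. -/
noncomputable def decompNorm2 {H : Type*} [NormedAddCommGroup H] [InnerProductSpace ℝ H]
    (L₁ L₂ : Submodule ℝ H) (y : H) : ℝ :=
  sInf {r : ℝ | ∃ y₁ y₂ : H, y₁ ∈ L₁ᗮ ∧ y₂ ∈ L₂ᗮ ∧ y = y₁ + y₂ ∧ r = ‖y₁‖ + ‖y₂‖}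

open Finset RealInnerProductSpace

section

variable {H : Type*} [NormedAddCommGroup H] [InnerProductSpace ℝ H]

lemma Module.End.geom_sum_apply_sub_apply (T : Module.End ℝ H) (x : H) (N : ℕ) :
    ∑ j ∈ Finset.range N, (T ^ j) x - T (∑ j ∈ Finset.range N, (T ^ j) x) = x - (T ^ N) x := by
  simpa [sub_mul, LinearMap.sum_apply] using LinearMap.congr_fun (mul_neg_geom_sum T N) x

lemma Submodule.inner_starProjection_apply_self (K : Submodule ℝ H) [K.HasOrthogonalProjection]
    (x : H) : ⟪K.starProjection x, x⟫ = ‖K.starProjection x‖ ^ 2 := by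
  simpa using K.re_inner_starProjection_eq_normSq x

lemma Submodule.starProjection_add_sub_mem_orthogonal (K : Submodule ℝ H)
    [K.HasOrthogonalProjection] {y₁ : H} (hy₁ : y₁ ∈ Kᗮ) (y₂ : H) :
    K.starProjection (y₁ + y₂) - y₂ ∈ Kᗮ := by
  rw [map_add, K.starProjection_apply_eq_zero_iff.mpr hy₁, zero_add, ← neg_sub]
  exact Kᗮ.neg_mem (K.sub_starProjection_mem_orthogonal y₂)

namespace LinearMap.IsSymmetric

variable {T : Module.End ℝ H}

lemma inner_pow_add_apply_self (hT : T.IsSymmetric) (m n : ℕ) (x : H) :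
    ⟪(T ^ (m + n)) x, x⟫ = ⟪(T ^ m) x, (T ^ n) x⟫ := by
  rw [pow_add, Module.End.mul_apply, hT.pow m, real_inner_comm]

lemma inner_pow_two_mul_apply_self (hT : T.IsSymmetric) (n : ℕ) (x : H) :
    ⟪(T ^ (2 * n)) x, x⟫ = ‖(T ^ n) x‖ ^ 2 := by
  rw [two_mul, hT.inner_pow_add_apply_self, real_inner_self_eq_norm_sq]

lemma inner_pow_two_mul_add_one_apply_self (hT : T.IsSymmetric) (n : ℕ) (x : H) :
    ⟪(T ^ (2 * n + 1)) x, x⟫ = ⟪T ((T ^ n) x), (T ^ n) x⟫ := by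
  rw [show 2 * n + 1 = (n + 1) + n by ring, hT.inner_pow_add_apply_self, pow_succ',
    Module.End.mul_apply]

lemma inner_sub_apply_geom_sum_le (hT : T.IsSymmetric) {x : H}
    (hx : ∀ n, 0 ≤ ⟪(T ^ n) x, x⟫) (N : ℕ) :
    ⟪∑ j ∈ Finset.range N, (T ^ j) x - T (∑ j ∈ Finset.range N, (T ^ j) x),
      ∑ j ∈ Finset.range N, (T ^ j) x⟫ ≤ ⟪∑ j ∈ Finset.range N, (T ^ j) x, x⟫ := by
  have hpos : 0 ≤ ⟪(T ^ N) x, ∑ j ∈ Finset.range N, (T ^ j) x⟫ := by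
    rw [inner_sum]
    exact sum_nonneg fun j _ ↦ hT.inner_pow_add_apply_self N j x ▸ hx _
  rw [Module.End.geom_sum_apply_sub_apply, inner_sub_left, real_inner_comm x]
  linarith

end LinearMap.IsSymmetric

section Projections

variable (L₁ L₂ : Submodule ℝ H) [L₁.HasOrthogonalProjection] [L₂.HasOrthogonalProjection]

noncomputable def projSandwich : Module.End ℝ H :=
  (L₁.starProjection ∘L L₂.starProjection ∘L L₁.starProjection : H →L[ℝ] H)

variable {L₁ L₂}

@[simp]
lemma projSandwich_apply (x : H) :
    projSandwich L₁ L₂ x = L₁.starProjection (L₂.starProjection (L₁.starProjection x)) :=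
  rfl

lemma projSandwich_isSymmetric : (projSandwich L₁ L₂).IsSymmetric := fun x y ↦ by
  simp only [projSandwich_apply, Submodule.inner_starProjection_left_eq_right]

lemma inner_projSandwich_apply_self (x : H) :
    ⟪projSandwich L₁ L₂ x, x⟫ = ‖L₂.starProjection (L₁.starProjection x)‖ ^ 2 := by
  rw [projSandwich_apply, Submodule.inner_starProjection_left_eq_right L₁,
    Submodule.inner_starProjection_apply_self]

lemma projSandwich_pow_apply_mem {x : H} (hx : x ∈ L₁) (n : ℕ) :
    (projSandwich L₁ L₂ ^ n) x ∈ L₁ := by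
  cases n with
  | zero => exact hx
  | succ n =>
    rw [pow_succ', Module.End.mul_apply, projSandwich_apply]
    exact L₁.starProjection_apply_mem _

lemma inner_projSandwich_pow_apply_self_nonneg (x : H) (n : ℕ) :
    0 ≤ ⟪(projSandwich L₁ L₂ ^ n) x, x⟫ := by
  obtain ⟨j, rfl | rfl⟩ := n.even_or_odd'
  · rw [projSandwich_isSymmetric.inner_pow_two_mul_apply_self]; positivity
  · rw [projSandwich_isSymmetric.inner_pow_two_mul_add_one_apply_self,
      inner_projSandwich_apply_self]; positivity

lemma inner_projSandwich_pow_succ_apply_self_le (x : H) (n : ℕ) :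
    ⟪(projSandwich L₁ L₂ ^ (n + 1)) x, x⟫ ≤ ⟪(projSandwich L₁ L₂ ^ n) x, x⟫ := by
  have hB := projSandwich_isSymmetric (L₁ := L₁) (L₂ := L₂)
  obtain ⟨j, rfl | rfl⟩ := n.even_or_odd'
  · rw [hB.inner_pow_two_mul_add_one_apply_self, hB.inner_pow_two_mul_apply_self,
      inner_projSandwich_apply_self]
    gcongr
    exact (L₂.norm_starProjection_apply_le _).trans (L₁.norm_starProjection_apply_le _)
  · rw [show 2 * j + 1 + 1 = 2 * (j + 1) by ring, hB.inner_pow_two_mul_apply_self,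
      hB.inner_pow_two_mul_add_one_apply_self, inner_projSandwich_apply_self,
      pow_succ' (projSandwich L₁ L₂), Module.End.mul_apply, projSandwich_apply]
    gcongr
    exact L₁.norm_starProjection_apply_le _

lemma inner_sub_projSandwich_apply_self {w : H} (hw : w ∈ L₁) :
    ⟪w - projSandwich L₁ L₂ w, w⟫ = ‖w - L₂.starProjection w‖ ^ 2 := by
  have hP₁w : L₁.starProjection w = w := Submodule.starProjection_eq_self_iff.mpr hw
  rw [inner_sub_left, real_inner_self_eq_norm_sq, inner_projSandwich_apply_self, hP₁w,
    ← Submodule.starProjection_orthogonal_val, sub_eq_iff_eq_add',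
    ← L₂.norm_sq_eq_add_norm_sq_starProjection w]

lemma sum_inner_projSandwich_pow_apply_self_le {u z : H} (hu : u ∈ L₁) (huz : u - z ∈ L₁ᗮ)
    (hz : z ∈ L₂ᗮ) (N : ℕ) :
    ∑ j ∈ Finset.range N, ⟪(projSandwich L₁ L₂ ^ j) u, u⟫ ≤ ‖z‖ ^ 2 := by
  set w := ∑ j ∈ Finset.range N, (projSandwich L₁ L₂ ^ j) u
  have hS : ∑ j ∈ Finset.range N, ⟪(projSandwich L₁ L₂ ^ j) u, u⟫ = ⟪w, u⟫ := (sum_inner ..).symm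
  have hw : w ∈ L₁ := Submodule.sum_mem _ fun j _ ↦ projSandwich_pow_apply_mem hu j
  have hwz : ⟪w, u⟫ = ⟪w - L₂.starProjection w, z⟫ := by
    rw [← sub_add_cancel u z, inner_add_right, Submodule.inner_right_of_mem_orthogonal hw huz,
      zero_add, inner_sub_left,
      Submodule.inner_right_of_mem_orthogonal (L₂.starProjection_apply_mem w) hz, sub_zero]
  have hres : ‖w - L₂.starProjection w‖ ^ 2 ≤ ⟪w, u⟫ := by
    rw [← inner_sub_projSandwich_apply_self hw]
    exact projSandwich_isSymmetric.inner_sub_apply_geom_sum_le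
      (inner_projSandwich_pow_apply_self_nonneg u) N
  have hCS : ⟪w, u⟫ ≤ ‖w - L₂.starProjection w‖ * ‖z‖ := hwz ▸ real_inner_le_norm _ _
  have hS₀ : 0 ≤ ⟪w, u⟫ := hS ▸ sum_nonneg fun j _ ↦ inner_projSandwich_pow_apply_self_nonneg u j
  rw [hS]
  nlinarith [norm_nonneg z, norm_nonneg (w - L₂.starProjection w)]

lemma norm_starProjection_projSandwich_pow_apply_mul_sqrt_le {u z : H} (hu : u ∈ L₁)
    (huz : u - z ∈ L₁ᗮ) (hz : z ∈ L₂ᗮ) (k : ℕ) :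
    ‖L₂.starProjection ((projSandwich L₁ L₂ ^ k) u)‖ * √(2 * k + 2) ≤ ‖z‖ := by
  have hmoment : ⟪(projSandwich L₁ L₂ ^ (2 * k + 1)) u, u⟫ =
      ‖L₂.starProjection ((projSandwich L₁ L₂ ^ k) u)‖ ^ 2 := by
    rw [projSandwich_isSymmetric.inner_pow_two_mul_add_one_apply_self,
      inner_projSandwich_apply_self,
      Submodule.starProjection_eq_self_iff.mpr (projSandwich_pow_apply_mem hu k)]
  have hanti : Antitone fun n ↦ ⟪(projSandwich L₁ L₂ ^ n) u, u⟫ :=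
    antitone_nat_of_succ_le (inner_projSandwich_pow_succ_apply_self_le u)
  have hsum : (2 * k + 2 : ℝ) * ⟪(projSandwich L₁ L₂ ^ (2 * k + 1)) u, u⟫ ≤ ‖z‖ ^ 2 := by
    refine le_trans ?_ (sum_inner_projSandwich_pow_apply_self_le hu huz hz (2 * k + 2))
    simpa using card_nsmul_le_sum (Finset.range (2 * k + 2)) _ _
      fun j hj ↦ hanti (Nat.le_of_lt_succ (mem_range.mp hj))
  rw [← Real.sqrt_sq (norm_nonneg z), ← Real.sqrt_sq (norm_nonneg (L₂.starProjection _)),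
    ← Real.sqrt_mul (sq_nonneg _)]
  exact Real.sqrt_le_sqrt (by rw [← hmoment]; linarith)

lemma iterate_starProjection_comp_succ_apply (x : H) (k : ℕ) :
    (fun y ↦ L₂.starProjection (L₁.starProjection y))^[k + 1] x =
      L₂.starProjection ((projSandwich L₁ L₂ ^ k) (L₁.starProjection x)) := by
  induction k generalizing x with
  | zero => rfl
  | succ k ih =>
    rw [Function.iterate_succ_apply, ih, pow_succ, Module.End.mul_apply, projSandwich_apply,
      Submodule.starProjection_eq_self_iff.mpr (L₁.starProjection_apply_mem x)]

end Projections

lemma le_decompNorm2 {L₁ L₂ : Submodule ℝ H} {y : H} {r : ℝ}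
    (hy : ∃ y₁ y₂ : H, y₁ ∈ L₁ᗮ ∧ y₂ ∈ L₂ᗮ ∧ y = y₁ + y₂)
    (h : ∀ y₁ y₂ : H, y₁ ∈ L₁ᗮ → y₂ ∈ L₂ᗮ → y = y₁ + y₂ → r ≤ ‖y₁‖ + ‖y₂‖) :
    r ≤ decompNorm2 L₁ L₂ y := by
  obtain ⟨y₁, y₂, hy₁, hy₂, hy⟩ := hy
  refine le_csInf ⟨_, y₁, y₂, hy₁, hy₂, hy, rfl⟩ ?_
  rintro _ ⟨z₁, z₂, hz₁, hz₂, hz, rfl⟩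
  exact h z₁ z₂ hz₁ hz₂ hz

end

theorem alternating_projections_two_subspaces_rate_general
    {H : Type*} [NormedAddCommGroup H] [InnerProductSpace ℝ H]
    (L₁ L₂ : Submodule ℝ H)
    [CompleteSpace L₁] [CompleteSpace L₂]
    (x₀ : H) (hx₀ : ∃ y₁ y₂ : H, y₁ ∈ L₁ᗮ ∧ y₂ ∈ L₂ᗮ ∧ x₀ = y₁ + y₂) :
    ∃ C : ℝ, C = decompNorm2 L₁ L₂ (Submodule.orthogonalProjection L₁ x₀ : H) ∧
      ∀ n : ℕ, 1 ≤ n →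
        ‖(fun y : H => (Submodule.orthogonalProjection L₂
            ((Submodule.orthogonalProjection L₁ y : H)) : H))^[n] x₀‖ ≤
          C / Real.sqrt (2 * (n : ℝ) - 1) := by
  refine ⟨_, rfl, fun n hn ↦ ?_⟩
  simp only [← Submodule.starProjection_apply]
  obtain ⟨k, rfl⟩ := Nat.exists_eq_add_of_le' hn
  obtain ⟨y₁, y₂, hy₁, hy₂, rfl⟩ := hx₀
  have hsqrt : √(2 * ((k + 1 : ℕ) : ℝ) - 1) ≤ √(2 * k + 2) :=
    Real.sqrt_le_sqrt (by push_cast; linarith)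
  rw [le_div_iff₀ (Real.sqrt_pos.mpr (by push_cast; linarith))]
  refine le_decompNorm2 ⟨_, y₂, L₁.starProjection_add_sub_mem_orthogonal hy₁ y₂, hy₂,
    (sub_add_cancel _ _).symm⟩ fun z₁ z₂ hz₁ hz₂ hz ↦ ?_
  calc _ ≤ ‖L₂.starProjection ((projSandwich L₁ L₂ ^ k) (L₁.starProjection (y₁ + y₂)))‖ *
        √(2 * k + 2) := by
        rw [← iterate_starProjection_comp_succ_apply]
        gcongr
    _ ≤ ‖z₂‖ := norm_starProjection_projSandwich_pow_apply_mul_sqrt_le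
        (L₁.starProjection_apply_mem _) (by rwa [hz, add_sub_cancel_right]) hz₂ k
    _ ≤ ‖z₁‖ + ‖z₂‖ := le_add_of_nonneg_left (norm_nonneg _)

theorem alternating_projections_two_subspaces_rate
    {H : Type*} [NormedAddCommGroup H] [InnerProductSpace ℝ H] [CompleteSpace H]
    (L₁ L₂ : Submodule ℝ H)
    (h₁ : IsClosed ((L₁ : Set H))) (h₂ : IsClosed ((L₂ : Set H)))
    [CompleteSpace L₁] [CompleteSpace L₂]
    (x₀ : H) (hx₀ : ∃ y₁ y₂ : H, y₁ ∈ L₁ᗮ ∧ y₂ ∈ L₂ᗮ ∧ x₀ = y₁ + y₂) :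
    ∃ C : ℝ, C = decompNorm2 L₁ L₂ (Submodule.orthogonalProjection L₁ x₀ : H) ∧
      ∀ n : ℕ, 1 ≤ n →
        ‖(fun y : H => (Submodule.orthogonalProjection L₂
            ((Submodule.orthogonalProjection L₁ y : H)) : H))^[n] x₀‖ ≤
          C / Real.sqrt (2 * (n : ℝ) - 1) :=
  alternating_projections_two_subspaces_rate_general L₁ L₂ x₀ hx₀
end

section
/- Let L₁,…,L_K be closed subspaces of a real Hilbert space H, y ∈ Y = L₁^⊥ + ⋯ + L_K^⊥ with y ≠ 0, and vⱼ = Pⱼ^⊥ P_{j-1} ⋯ P₁ y. Define ν(y) = (Σⱼ ‖vⱼ‖²)^{1/2} / ‖y‖ and let s(y) be the decomposition norm. Then ν(y) ≥ ‖y‖ / (K · s(y)). -/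
/- Proof idea. For any decomposition `y = Σⱼ fⱼ` with `fⱼ ∈ Lⱼᗮ`, the point `z (j+1) = Pⱼ ⋯ P₁ y`
lies in `Lⱼ`, so `⟪y, fⱼ⟫ = ⟪y - z (j+1), fⱼ⟫ ≤ ‖v₁ + ⋯ + vⱼ‖ ‖fⱼ‖`. Summing over `j` gives
`‖y‖² ≤ (Σⱼ ‖vⱼ‖) s(y) ≤ K (Σⱼ ‖vⱼ‖²)^{1/2} s(y)`, which rearranges to the claim. -/

open scoped RealInnerProductSpace

/-- The decomposition norm `s(y) = inf { Σⱼ ‖yⱼ‖ : y = Σⱼ yⱼ, yⱼ ∈ Lⱼ^⊥ }`. -/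
noncomputable def decompNorm {H : Type*} [NormedAddCommGroup H] [InnerProductSpace ℝ H]
    {K : ℕ} (L : Fin K → Submodule ℝ H) (y : H) : ℝ :=
  sInf {r : ℝ | ∃ f : Fin K → H, (∀ j, f j ∈ (L j)ᗮ) ∧ y = ∑ j, f j ∧ r = ∑ j, ‖f j‖}

theorem div_le_div_of_sq_le_mul {a b c : ℝ} (ha : 0 ≤ a) (hc : 0 ≤ c) (h : a ^ 2 ≤ b * c) :
    a / b ≤ c / a := by
  rcases ha.eq_or_lt with rfl | ha
  · simp
  have hbc : 0 < b * c := (pow_pos ha 2).trans_le h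
  have hb : 0 < b := pos_of_mul_pos_left hbc hc
  rw [div_le_div_iff₀ hb ha]
  nlinarith

theorem sum_le_card_mul_sqrt_sum_sq {ι : Type*} (s : Finset ι) (f : ι → ℝ) :
    ∑ i ∈ s, f i ≤ s.card * √(∑ i ∈ s, f i ^ 2) := by
  rw [← nsmul_eq_mul]
  refine Finset.sum_le_card_nsmul s f _ fun i hi => Real.le_sqrt_of_sq_le ?_
  exact Finset.single_le_sum (fun j _ => sq_nonneg (f j)) hi

theorem dist_le_sum_range_dist_succ {α : Type*} [PseudoMetricSpace α] (z : ℕ → α)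
    {n N : ℕ} (hn : n ≤ N) :
    dist (z 0) (z n) ≤ ∑ i ∈ Finset.range N, dist (z i) (z (i + 1)) :=
  (dist_le_range_sum_dist z n).trans <| Finset.sum_le_sum_of_subset_of_nonneg
    (Finset.range_mono hn) fun _ _ _ => dist_nonneg

section Hilbert

variable {H : Type*} [NormedAddCommGroup H] [InnerProductSpace ℝ H] {ι : Type*} [Fintype ι]

theorem sq_norm_le_mul_sum_norm_of_mem_orthogonal (L : ι → Submodule ℝ H) {y : H} {C : ℝ}
    (w : ι → H) (hw : ∀ j, w j ∈ L j) (hyw : ∀ j, ‖y - w j‖ ≤ C)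
    (f : ι → H) (hf : ∀ j, f j ∈ (L j)ᗮ) (hy : y = ∑ j, f j) :
    ‖y‖ ^ 2 ≤ C * ∑ j, ‖f j‖ := by
  have hterm : ∀ j, ⟪y, f j⟫ ≤ C * ‖f j‖ := fun j => calc
    ⟪y, f j⟫ = ⟪y - w j, f j⟫ := by
      rw [inner_sub_left, Submodule.inner_right_of_mem_orthogonal (hw j) (hf j), sub_zero]
    _ ≤ ‖y - w j‖ * ‖f j‖ := real_inner_le_norm _ _
    _ ≤ C * ‖f j‖ := by gcongr; exact hyw j
  calc ‖y‖ ^ 2 = ⟪y, y⟫ := (real_inner_self_eq_norm_sq y).symm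
    _ = ⟪y, ∑ j, f j⟫ := by rw [← hy]
    _ = ∑ j, ⟪y, f j⟫ := inner_sum _ _ _
    _ ≤ ∑ j, C * ‖f j‖ := Finset.sum_le_sum fun j _ => hterm j
    _ = C * ∑ j, ‖f j‖ := (Finset.mul_sum _ _ _).symm

variable {K : ℕ}

theorem le_mul_decompNorm (L : Fin K → Submodule ℝ H) {y : H}
    (hy : ∃ f : Fin K → H, (∀ j, f j ∈ (L j)ᗮ) ∧ y = ∑ j, f j) {a c : ℝ} (hc : 0 ≤ c)
    (h : ∀ f : Fin K → H, (∀ j, f j ∈ (L j)ᗮ) → y = ∑ j, f j → a ≤ c * ∑ j, ‖f j‖) :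
    a ≤ c * decompNorm L y := by
  obtain ⟨f, hf, hsum⟩ := hy
  rw [decompNorm, ← smul_eq_mul, ← Real.sInf_smul_of_nonneg hc]
  refine le_csInf ⟨_, Set.smul_mem_smul_set ⟨f, hf, hsum, rfl⟩⟩ ?_
  rintro _ ⟨_, ⟨g, hg, hgsum, rfl⟩, rfl⟩
  exact h g hg hgsum

/-- Lemma A of the paper: `dist(y, Lₖ) ≥ ‖y‖² / s(y)` for the remotest index `k`. -/
theorem sq_norm_le_mul_decompNorm (L : Fin K → Submodule ℝ H) {y : H}
    (hy : ∃ f : Fin K → H, (∀ j, f j ∈ (L j)ᗮ) ∧ y = ∑ j, f j) {C : ℝ} (hC : 0 ≤ C)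
    (w : Fin K → H) (hw : ∀ j, w j ∈ L j) (hyw : ∀ j, ‖y - w j‖ ≤ C) :
    ‖y‖ ^ 2 ≤ C * decompNorm L y :=
  le_mul_decompNorm L hy hC fun f hf hsum =>
    sq_norm_le_mul_sum_norm_of_mem_orthogonal L w hw hyw f hf hsum

end Hilbert

theorem nu_ge_norm_div_K_mul_decompNorm_general
    {H : Type*} [NormedAddCommGroup H] [InnerProductSpace ℝ H]
    {K : ℕ} (L : Fin K → Submodule ℝ H)
    [∀ k, CompleteSpace (L k)]
    (y : H) (hy : ∃ f : Fin K → H, (∀ j, f j ∈ (L j)ᗮ) ∧ y = ∑ j, f j)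
    (z : ℕ → H) (hz0 : z 0 = y)
    (hz : ∀ j : Fin K, z ((j : ℕ) + 1) = (Submodule.orthogonalProjection (L j) (z j) : H))
    (v : Fin K → H) (hv : ∀ j : Fin K, v j = z j - z ((j : ℕ) + 1)) :
    Real.sqrt (∑ j, ‖v j‖ ^ 2) / ‖y‖ ≥ ‖y‖ / (K * decompNorm L y) := by
  have hsum_v : ∑ j, ‖v j‖ = ∑ i ∈ Finset.range K, dist (z i) (z (i + 1)) := by
    simp only [hv, ← dist_eq_norm]
    exact Fin.sum_univ_eq_sum_range (fun i => dist (z i) (z (i + 1))) K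
  have hdist : ∀ j : Fin K, ‖y - z ((j : ℕ) + 1)‖ ≤ ∑ j, ‖v j‖ := fun j => by
    rw [← dist_eq_norm, ← hz0, hsum_v]
    exact dist_le_sum_range_dist_succ z j.isLt
  have hsum_le : ∑ j, ‖v j‖ ≤ K * √(∑ j, ‖v j‖ ^ 2) := by
    simpa using sum_le_card_mul_sqrt_sum_sq Finset.univ fun j => ‖v j‖
  have hnorm_sq : ‖y‖ ^ 2 ≤ (K * √(∑ j, ‖v j‖ ^ 2)) * decompNorm L y :=
    sq_norm_le_mul_decompNorm L hy (by positivity) _ (fun j => hz j ▸ Submodule.coe_mem _)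
      fun j => (hdist j).trans hsum_le
  exact div_le_div_of_sq_le_mul (norm_nonneg y) (Real.sqrt_nonneg _) (hnorm_sq.trans_eq (by ring))

theorem nu_ge_norm_div_K_mul_decompNorm
    {H : Type*} [NormedAddCommGroup H] [InnerProductSpace ℝ H] [CompleteSpace H]
    {K : ℕ} (hK : 0 < K) (L : Fin K → Submodule ℝ H)
    (hclosed : ∀ k, IsClosed ((L k : Set H))) [∀ k, CompleteSpace (L k)]
    (y : H) (hy : ∃ f : Fin K → H, (∀ j, f j ∈ (L j)ᗮ) ∧ y = ∑ j, f j)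
    (hy0 : y ≠ 0)
    (z : ℕ → H) (hz0 : z 0 = y)
    (hz : ∀ j : Fin K, z ((j : ℕ) + 1) = (Submodule.orthogonalProjection (L j) (z j) : H))
    (v : Fin K → H) (hv : ∀ j : Fin K, v j = z j - z ((j : ℕ) + 1)) :
    Real.sqrt (∑ j, ‖v j‖ ^ 2) / ‖y‖ ≥ ‖y‖ / (K * decompNorm L y) :=
  nu_ge_norm_div_K_mul_decompNorm_general L y hy z hz0 hz v hv
end
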